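/- arXiv:2505.16185 — 3 statements merged into one kernel-verified Lean document; each statement's English description precedes it below -/
import Mathlib

section
/- For every t ≥ 1 and every n < m, there is a formula φ of 2-variable counting logic with counting rank at most t, of size at most 2⌈(n+1)/t⌉ + 4 (hence of size O(n/t)), such that A_n ⊨ φ and A_m ⊨ ¬φ. -/
/-- Terms over the linear-order signature `{min, max, <, succ}`. -/
inductive LTerm : Type
  | min : LTerm
  | max : LTerm
  | var : ℕ → LTerm

/-- Formulas of counting logic over the signature `{min, max, <, succ}`:
first-order logic extended with the counting quantifiers `∃^{≥k} x_j` and `∀^{≥k} x_j`. -/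
inductive CFormula : Type
  | eq : LTerm → LTerm → CFormula
  | lt : LTerm → LTerm → CFormula
  | succ : LTerm → LTerm → CFormula
  | not : CFormula → CFormula
  | or : CFormula → CFormula → CFormula
  | and : CFormula → CFormula → CFormula
  | exCnt : ℕ → ℕ → CFormula → CFormula    -- `exCnt k j ψ` is `∃^{≥k} x_j ψ`
  | allCnt : ℕ → ℕ → CFormula → CFormula   -- `allCnt k j ψ` is `∀^{≥k} x_j ψ = ¬∃^{≥k} x_j ¬ψ`

/-- All variables occurring in a term have index `< m`. -/
def LTerm.varsLT (m : ℕ) : LTerm → Prop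
  | .var j => j < m
  | _ => True

namespace CFormula

/-- Formula size. -/
def size : CFormula → ℕ
  | eq _ _ => 1
  | lt _ _ => 1
  | succ _ _ => 1
  | not ψ => ψ.size + 1
  | or ψ θ => ψ.size + θ.size
  | and ψ θ => ψ.size + θ.size
  | exCnt _ _ ψ => ψ.size + 1
  | allCnt _ _ ψ => ψ.size + 1

/-- Counting rank: the maximum counting rank of the quantifiers of the formula. -/
def crank : CFormula → ℕ
  | eq _ _ => 0
  | lt _ _ => 0
  | succ _ _ => 0
  | not ψ => ψ.crank
  | or ψ θ => max ψ.crank θ.crank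
  | and ψ θ => max ψ.crank θ.crank
  | exCnt k _ ψ => max k ψ.crank
  | allCnt k _ ψ => max k ψ.crank

/-- Quantifier rank: maximal nesting depth of quantifiers. -/
def qrank : CFormula → ℕ
  | eq _ _ => 0
  | lt _ _ => 0
  | succ _ _ => 0
  | not ψ => ψ.qrank
  | or ψ θ => max ψ.qrank θ.qrank
  | and ψ θ => max ψ.qrank θ.qrank
  | exCnt _ _ ψ => ψ.qrank + 1
  | allCnt _ _ ψ => ψ.qrank + 1

/-- The formula uses only the variables `x_0, …, x_{m-1}`. -/
def varsLT (m : ℕ) : CFormula → Prop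
  | eq t t' => t.varsLT m ∧ t'.varsLT m
  | lt t t' => t.varsLT m ∧ t'.varsLT m
  | succ t t' => t.varsLT m ∧ t'.varsLT m
  | not ψ => ψ.varsLT m
  | or ψ θ => ψ.varsLT m ∧ θ.varsLT m
  | and ψ θ => ψ.varsLT m ∧ θ.varsLT m
  | exCnt _ j ψ => j < m ∧ ψ.varsLT m
  | allCnt _ j ψ => j < m ∧ ψ.varsLT m

/-- Atomic formulas. -/
def IsAtomic : CFormula → Prop
  | eq _ _ => True
  | lt _ _ => True
  | succ _ _ => True
  | _ => False

end CFormula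

/-- A relational structure over the signature `{min, max, <, succ}`. -/
structure LOStruct : Type 1 where
  carrier : Type
  lt : carrier → carrier → Prop
  succ : carrier → carrier → Prop
  bot : carrier
  top : carrier

/-- Value of a term in a structure under a variable assignment. -/
def LTerm.val (S : LOStruct) (α : ℕ → S.carrier) : LTerm → S.carrier
  | .min => S.bot
  | .max => S.top
  | .var j => α j

/-- Satisfaction of a counting-logic formula in a structure under an assignment.
`∃^{≥k} x_j ψ` holds iff at least `k` distinct values for `x_j` satisfy `ψ`. -/
def Sat (S : LOStruct) : (ℕ → S.carrier) → CFormula → Prop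
  | α, .eq t t' => t.val S α = t'.val S α
  | α, .lt t t' => S.lt (t.val S α) (t'.val S α)
  | α, .succ t t' => S.succ (t.val S α) (t'.val S α)
  | α, .not ψ => ¬ Sat S α ψ
  | α, .or ψ θ => Sat S α ψ ∨ Sat S α θ
  | α, .and ψ θ => Sat S α ψ ∧ Sat S α θ
  | α, .exCnt k j ψ =>
      ∃ f : Fin k → S.carrier, Function.Injective f ∧
        ∀ i, Sat S (Function.update α j (f i)) ψ
  | α, .allCnt k j ψ =>
      ¬ ∃ f : Fin k → S.carrier, Function.Injective f ∧
        ∀ i, ¬ Sat S (Function.update α j (f i)) ψ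

/-- The linear order `A_n = ({0,…,n}, <)` with `min = 0`, `max = n` and the successor relation. -/
def AStruct (n : ℕ) : LOStruct where
  carrier := Fin (n + 1)
  lt := fun a b => a < b
  succ := fun a b => (a : ℕ) + 1 = (b : ℕ)
  bot := 0
  top := Fin.last n


/-!
Write `x ≥ c` for "at least `c` elements lie strictly below `x`". Alternating between the two
variables, `x ≥ (i + 1) t` holds iff at least `t` elements `y < x` satisfy `y ≥ i t`; so
`x ≥ r t` is expressible with counting rank `t` and size `2r + 1`. Writing `n + 2 = r t + s` with
`r = ⌊(n + 1) / t⌋` and `1 ≤ s ≤ t`, the sentence `∃^{≥s} x (x ≥ r t)` says that the order has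
at least `n + 2` elements: it fails in `A_n` and holds in `A_m`, so its negation separates them.
-/

open Function

theorem sat_exCnt_iff_le_card {S : LOStruct} [Finite S.carrier] (α : ℕ → S.carrier)
    (k j : ℕ) (ψ : CFormula) :
    Sat S α (.exCnt k j ψ) ↔ k ≤ Nat.card {v // Sat S (update α j v) ψ} := by
  have := Fintype.ofFinite S.carrier
  constructor
  · rintro ⟨f, hf, hsat⟩
    have hinj : Injective fun i => (⟨f i, hsat i⟩ : {v // Sat S (update α j v) ψ}) :=
      fun i i' h => hf (congrArg Subtype.val h)
    simpa using Nat.card_le_card_of_injective _ hinj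
  · intro hk
    classical
    obtain ⟨e⟩ := Embedding.nonempty_of_card_le
      (α := Fin k) (β := {v // Sat S (update α j v) ψ})
      (by simpa [Nat.card_eq_fintype_card] using hk)
    exact ⟨fun i => e i, Subtype.val_injective.comp e.injective, fun i => (e i).2⟩

theorem Fin.natCard_val_mem_Ico {N : ℕ} (c : ℕ) {b : ℕ} (hb : b ≤ N + 1) :
    Nat.card {v : Fin (N + 1) // c ≤ (v : ℕ) ∧ (v : ℕ) < b} = b - c := by
  rw [← Set.ncard_Ico_nat c b, ← Nat.card_coe_set_eq]
  exact Nat.card_congr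
    { toFun := fun v => ⟨v.1, v.2⟩
      invFun := fun x => ⟨⟨x.1, by have := x.2.2; omega⟩, x.2⟩
      left_inv := fun _ => rfl
      right_inv := fun _ => rfl }

instance (N : ℕ) : Finite (AStruct N).carrier := inferInstanceAs (Finite (Fin (N + 1)))

namespace CFormula

/-- `geMul t i j` expresses `i * t ≤ x_j`, alternating between `x_j` and `x_{1-j}`. -/
def geMul (t : ℕ) : ℕ → ℕ → CFormula
  | 0, _ => .eq .min .min
  | i + 1, j => .exCnt t (1 - j) (.and (.lt (.var (1 - j)) (.var j)) (geMul t i (1 - j)))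

theorem geMul_varsLT (t i : ℕ) {j : ℕ} (hj : j < 2) : (geMul t i j).varsLT 2 := by
  induction i generalizing j with
  | zero => exact ⟨trivial, trivial⟩
  | succ i ih => exact ⟨by omega, ⟨show 1 - j < 2 by omega, hj⟩, ih (by omega)⟩

theorem size_geMul (t i j : ℕ) : (geMul t i j).size = 2 * i + 1 := by
  induction i generalizing j with
  | zero => rfl
  | succ i ih => simp only [geMul, size, ih]; omega

theorem crank_geMul_le (t i j : ℕ) : (geMul t i j).crank ≤ t := by
  induction i generalizing j with
  | zero => exact Nat.zero_le t
  | succ i ih => exact max_le le_rfl (max_le (Nat.zero_le t) (ih _))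

end CFormula

open CFormula

theorem sat_geMul_iff {N : ℕ} (t i : ℕ) {j : ℕ} (hj : j < 2) (α : ℕ → (AStruct N).carrier) :
    Sat (AStruct N) α (geMul t i j) ↔ i * t ≤ Fin.val (α j) := by
  induction i generalizing j α with
  | zero => simp [geMul, Sat]
  | succ i ih =>
    have below : ∀ v : (AStruct N).carrier,
        Sat (AStruct N) (update α (1 - j) v)
            (.and (.lt (.var (1 - j)) (.var j)) (geMul t i (1 - j))) ↔
          i * t ≤ Fin.val v ∧ Fin.val v < Fin.val (α j) := by
      intro v
      have hv : update α (1 - j) v j = α j := update_of_ne (by omega) _ _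
      rw [Sat, ih (by omega), update_self, Sat, LTerm.val, LTerm.val, update_self, hv]
      exact and_comm
    have hcard : Nat.card {v // Sat (AStruct N) (update α (1 - j) v)
        (.and (.lt (.var (1 - j)) (.var j)) (geMul t i (1 - j)))} = Fin.val (α j) - i * t :=
      (Nat.card_congr (Equiv.subtypeEquivRight below)).trans
        (Fin.natCard_val_mem_Ico _ (Fin.isLt (α j)).le)
    rw [geMul, sat_exCnt_iff_le_card, hcard, Nat.succ_mul]
    rcases Nat.eq_zero_or_pos t with rfl | ht
    · simp
    · omega

theorem sat_exCnt_geMul_iff {N t r s : ℕ} (hs : 1 ≤ s) (α : ℕ → (AStruct N).carrier) :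
    Sat (AStruct N) α (.exCnt s 0 (geMul t r 0)) ↔ r * t + s ≤ N + 1 := by
  have above : ∀ v : (AStruct N).carrier, Sat (AStruct N) (update α 0 v) (geMul t r 0)
      ↔ r * t ≤ Fin.val v ∧ Fin.val v < N + 1 := fun v => by
    rw [sat_geMul_iff t r (by omega), update_self]
    exact (and_iff_left (Fin.isLt v)).symm
  have hcard :
      Nat.card {v // Sat (AStruct N) (update α 0 v) (geMul t r 0)} = N + 1 - r * t :=
    (Nat.card_congr (Equiv.subtypeEquivRight above)).trans (Fin.natCard_val_mem_Ico _ le_rfl)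
  rw [sat_exCnt_iff_le_card, hcard]
  omega

/-- For every `t ≥ 1` and every `n < m`, there is a formula `φ` of 2-variable
counting logic with counting rank at most `t`, of size at most `2⌈(n+1)/t⌉ + 4`
(note `⌈(n+1)/t⌉ = (n + t) / t` in natural-number arithmetic), such that `A_n ⊨ φ` and
`A_m ⊨ ¬φ`. -/
theorem counting2_size_upper_bound (t n m : ℕ) (ht : 1 ≤ t) (hnm : n < m) :
    ∃ φ : CFormula, φ.varsLT 2 ∧ φ.crank ≤ t ∧ φ.size ≤ 2 * ((n + t) / t) + 4 ∧
      Sat (AStruct n) (fun _ => (AStruct n).bot) φ ∧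
      ¬ Sat (AStruct m) (fun _ => (AStruct m).bot) φ := by
  set r := (n + 1) / t
  have hr_le : r * t ≤ n + 1 := Nat.div_mul_le_self _ _
  have hr_gt : n + 1 < r * t + t := Nat.lt_div_mul_add ht
  have hr_ceil : r ≤ (n + t) / t := Nat.div_le_div_right (by omega)
  set s := n + 2 - r * t
  have hs : 1 ≤ s := by omega
  refine ⟨CFormula.not (.exCnt s 0 (geMul t r 0)), ⟨by omega, geMul_varsLT t r (by omega)⟩,
    max_le (by omega) (crank_geMul_le t r 0), ?_, ?_, ?_⟩
  · simp only [size, size_geMul]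
    omega
  · rw [Sat, sat_exCnt_geMul_iff hs]
    omega
  · rw [Sat, sat_exCnt_geMul_iff hs]
    omega
end

section
/- Characterization Theorem: Let A, B be families of interpretations with the same assignment domain, and let w be a positive integer. Then the following are equivalent: (1) Spoiler has a winning strategy in the game CS^m_w(A, B); (2) there is a formula φ of m-variable counting logic of size |φ| ≤ w such that (A, B) ⊨ φ. -/
/-- `F` is a `k`-choice function on the family `A` (over the structure `S`): it assigns to every
interpretation `k` pairwise distinct elements of the universe. -/
def IsKChoice {S : LOStruct} (k : ℕ) (A : Set (ℕ → S.carrier))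
    (F : (ℕ → S.carrier) → Fin k → S.carrier) : Prop :=
  ∀ α ∈ A, Function.Injective (F α)

/-- The `k`-change operation `A(F^k/j)`: each interpretation gives rise to `k` interpretations,
with the assignment of `x_j` changed according to the `k`-choice function `F`. -/
def chFam {S : LOStruct} (k : ℕ) (A : Set (ℕ → S.carrier)) (j : ℕ)
    (F : (ℕ → S.carrier) → Fin k → S.carrier) : Set (ℕ → S.carrier) :=
  {α' | ∃ α ∈ A, ∃ i : Fin k, α' = Function.update α j (F α i)}

/-- The `k`-multiplication operation `B(*^k/j)`: for every `k`-choice function `G` on `B` a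
selection (given by `sel G`) picks one of the `k` elements for each interpretation; the result
is the union over all `k`-choice functions `G` of `B(G_sel/j)`. -/
def mulFam {S : LOStruct} (k : ℕ) (B : Set (ℕ → S.carrier)) (j : ℕ)
    (sel : ((ℕ → S.carrier) → Fin k → S.carrier) → (ℕ → S.carrier) → Fin k) :
    Set (ℕ → S.carrier) :=
  {β' | ∃ G : (ℕ → S.carrier) → Fin k → S.carrier, IsKChoice k B G ∧
        ∃ β ∈ B, β' = Function.update β j (G β (sel G β))}

/-- Some atomic formula (in the variables `x_0,…,x_{m-1}`) distinguishes the families `A`, `B`. -/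
def AtomWin (m : ℕ) (SA SB : LOStruct) (A : Set (ℕ → SA.carrier))
    (B : Set (ℕ → SB.carrier)) : Prop :=
  ∃ φ : CFormula, φ.IsAtomic ∧ φ.varsLT m ∧
    (∀ α ∈ A, Sat SA α φ) ∧ (∀ β ∈ B, ¬ Sat SB β φ)

/-- Spoiler has a winning strategy in the game `CS^m_w(A,B)` (the formula-size game for
`m`-variable counting logic).  From a position `(w, A, B)`:
* Spoiler wins immediately (at any `w ≥ 1`) if some atomic formula distinguishes `A` and `B`;
* ¬-move: the game continues from `(w-1, B, A)`;
* ∨-move: Spoiler picks `u, v ≥ 1` with `u + v = w` and covers `A = C ∪ D`; Duplicator chooses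
  to continue from `(u, C, B)` or `(v, D, B)`, so Spoiler must win both;
* ∧-move: symmetric, splitting `B`;
* `∃^{≥k}`-move: Spoiler picks `j < m`, `k`, a `k`-choice function `F` on `A`, and for every
  `k`-choice function `G` on `B` a selection `sel G`; the game continues from
  `(w-1, A(F^k/j), B(*^k/j))`;
* `∀^{≥k}`-move: symmetric with the roles of `A` and `B` exchanged. -/
inductive SpoilerWins (m : ℕ) :
    (SA : LOStruct) → (SB : LOStruct) → ℕ →
      Set (ℕ → SA.carrier) → Set (ℕ → SB.carrier) → Prop where
  | atom (SA SB : LOStruct) (w : ℕ) (A : Set (ℕ → SA.carrier)) (B : Set (ℕ → SB.carrier)) :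
      1 ≤ w → AtomWin m SA SB A B → SpoilerWins m SA SB w A B
  | neg (SA SB : LOStruct) (w : ℕ) (A : Set (ℕ → SA.carrier)) (B : Set (ℕ → SB.carrier)) :
      SpoilerWins m SB SA w B A → SpoilerWins m SA SB (w + 1) A B
  | or (SA SB : LOStruct) (u v : ℕ) (A C D : Set (ℕ → SA.carrier)) (B : Set (ℕ → SB.carrier)) :
      1 ≤ u → 1 ≤ v → C ∪ D = A →
      SpoilerWins m SA SB u C B → SpoilerWins m SA SB v D B →
      SpoilerWins m SA SB (u + v) A B
  | and (SA SB : LOStruct) (u v : ℕ) (A : Set (ℕ → SA.carrier)) (B C D : Set (ℕ → SB.carrier)) :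
      1 ≤ u → 1 ≤ v → C ∪ D = B →
      SpoilerWins m SA SB u A C → SpoilerWins m SA SB v A D →
      SpoilerWins m SA SB (u + v) A B
  | exCnt (SA SB : LOStruct) (w : ℕ) (A : Set (ℕ → SA.carrier)) (B : Set (ℕ → SB.carrier))
      (j k : ℕ) (F : (ℕ → SA.carrier) → Fin k → SA.carrier)
      (sel : ((ℕ → SB.carrier) → Fin k → SB.carrier) → (ℕ → SB.carrier) → Fin k) :
      j < m → IsKChoice k A F →
      SpoilerWins m SA SB w (chFam k A j F) (mulFam k B j sel) →
      SpoilerWins m SA SB (w + 1) A B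
  | allCnt (SA SB : LOStruct) (w : ℕ) (A : Set (ℕ → SA.carrier)) (B : Set (ℕ → SB.carrier))
      (j k : ℕ) (F : (ℕ → SB.carrier) → Fin k → SB.carrier)
      (sel : ((ℕ → SA.carrier) → Fin k → SA.carrier) → (ℕ → SA.carrier) → Fin k) :
      j < m → IsKChoice k B F →
      SpoilerWins m SA SB w (mulFam k A j sel) (chFam k B j F) →
      SpoilerWins m SA SB (w + 1) A B

lemma CFormula.one_le_size (φ : CFormula) : 1 ≤ φ.size := by
  induction φ <;> simp [CFormula.size] <;> omega

lemma CFormula.size_eq_one_of_atomic {φ : CFormula} (h : φ.IsAtomic) : φ.size = 1 := by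
  cases φ <;> simp_all [CFormula.size, CFormula.IsAtomic]

lemma toFormula {m : ℕ} {SA SB : LOStruct} {w : ℕ} {A : Set (ℕ → SA.carrier)}
    {B : Set (ℕ → SB.carrier)} (h : SpoilerWins m SA SB w A B) :
    ∃ φ : CFormula, φ.varsLT m ∧ φ.size ≤ w ∧
      (∀ α ∈ A, Sat SA α φ) ∧ (∀ β ∈ B, ¬ Sat SB β φ) := by
  induction h with
  | atom SA SB w A B hw hwin =>
      obtain ⟨φ, hat, hv, hA, hB⟩ := hwin
      exact ⟨φ, hv, by rw [CFormula.size_eq_one_of_atomic hat]; exact hw, hA, hB⟩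
  | neg SA SB w A B h ih =>
      obtain ⟨φ, hv, hs, hB, hA⟩ := ih
      refine ⟨.not φ, hv, by simp [CFormula.size]; omega, fun α hα => hA α hα,
        fun β hβ => not_not_intro (hB β hβ)⟩
  | or SA SB u v A C D B hu hv hCD hC hD ihC ihD =>
      obtain ⟨φ, hφv, hφs, hφA, hφB⟩ := ihC
      obtain ⟨ψ, hψv, hψs, hψA, hψB⟩ := ihD
      refine ⟨.or φ ψ, ⟨hφv, hψv⟩, by simp [CFormula.size]; omega, ?_, ?_⟩
      · intro α hα
        rcases (hCD ▸ hα : α ∈ C ∪ D) with h | h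
        · exact Or.inl (hφA α h)
        · exact Or.inr (hψA α h)
      · exact fun β hβ => by
          intro hor; rcases hor with h | h
          · exact hφB β hβ h
          · exact hψB β hβ h
  | and SA SB u v A B C D hu hv hCD hC hD ihC ihD =>
      obtain ⟨φ, hφv, hφs, hφA, hφB⟩ := ihC
      obtain ⟨ψ, hψv, hψs, hψA, hψB⟩ := ihD
      refine ⟨.and φ ψ, ⟨hφv, hψv⟩, by simp [CFormula.size]; omega,
        fun α hα => ⟨hφA α hα, hψA α hα⟩, ?_⟩
      intro β hβ hand
      rcases (hCD ▸ hβ : β ∈ C ∪ D) with h | h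
      · exact hφB β h hand.1
      · exact hψB β h hand.2
  | exCnt SA SB w A B j k F sel hj hF h ih =>
      obtain ⟨φ, hφv, hφs, hφA, hφB⟩ := ih
      refine ⟨.exCnt k j φ, ⟨hj, hφv⟩, by simp [CFormula.size]; omega, ?_, ?_⟩
      · intro α hα
        exact ⟨F α, hF α hα, fun i => hφA _ ⟨α, hα, i, rfl⟩⟩
      · rintro β hβ ⟨f, finj, hf⟩
        exact hφB _ ⟨fun _ => f, fun _ _ => finj, β, hβ, rfl⟩ (hf _)
  | allCnt SA SB w A B j k F sel hj hF h ih =>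
      obtain ⟨φ, hφv, hφs, hφA, hφB⟩ := ih
      refine ⟨.allCnt k j φ, ⟨hj, hφv⟩, by simp [CFormula.size]; omega, ?_, ?_⟩
      · rintro α hα ⟨f, finj, hf⟩
        exact hf (sel (fun _ => f) α) (hφA _ ⟨fun _ => f, fun _ _ => finj, α, hα, rfl⟩)
      · intro β hβ
        exact not_not_intro ⟨F β, hF β hβ, fun i => hφB _ ⟨β, hβ, i, rfl⟩⟩

lemma ofFormula {m : ℕ} (φ : CFormula) : ∀ (w : ℕ) (SA SB : LOStruct)
    (A : Set (ℕ → SA.carrier)) (B : Set (ℕ → SB.carrier)),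
    φ.varsLT m → φ.size ≤ w → (∀ α ∈ A, Sat SA α φ) → (∀ β ∈ B, ¬ Sat SB β φ) →
    SpoilerWins m SA SB w A B := by
  induction φ with
  | eq t t' =>
      intro w SA SB A B hv hs hA hB
      exact .atom SA SB w A B hs ⟨.eq t t', trivial, hv, hA, hB⟩
  | lt t t' =>
      intro w SA SB A B hv hs hA hB
      exact .atom SA SB w A B hs ⟨.lt t t', trivial, hv, hA, hB⟩
  | succ t t' =>
      intro w SA SB A B hv hs hA hB
      exact .atom SA SB w A B hs ⟨.succ t t', trivial, hv, hA, hB⟩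
  | not ψ ih =>
      intro w SA SB A B hv hs hA hB
      obtain ⟨w', rfl⟩ : ∃ w', w = w' + 1 :=
        ⟨w - 1, by have := ψ.one_le_size; simp [CFormula.size] at hs; omega⟩
      exact .neg SA SB w' A B (ih w' SB SA B A hv
        (by simp [CFormula.size] at hs; omega)
        (fun β hβ => not_not.mp (hB β hβ)) (fun α hα => hA α hα))
  | or ψ θ ihψ ihθ =>
      intro w SA SB A B hv hs hA hB
      have h1 := ψ.one_le_size; have h2 := θ.one_le_size
      simp only [CFormula.size] at hs
      have hw : w = ψ.size + (w - ψ.size) := by omega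
      rw [hw]
      refine .or SA SB _ _ A {α ∈ A | Sat SA α ψ} {α ∈ A | Sat SA α θ} B h1 (by omega) ?_
        (ihψ _ SA SB _ B hv.1 le_rfl (fun α hα => hα.2) (fun β hβ => fun h => hB β hβ (Or.inl h)))
        (ihθ _ SA SB _ B hv.2 (by omega) (fun α hα => hα.2) (fun β hβ => fun h => hB β hβ (Or.inr h)))
      ext α
      constructor
      · rintro (h | h) <;> exact h.1
      · intro hα
        rcases hA α hα with h | h
        · exact Or.inl ⟨hα, h⟩
        · exact Or.inr ⟨hα, h⟩
  | and ψ θ ihψ ihθ =>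
      intro w SA SB A B hv hs hA hB
      have h1 := ψ.one_le_size; have h2 := θ.one_le_size
      simp only [CFormula.size] at hs
      have hw : w = ψ.size + (w - ψ.size) := by omega
      rw [hw]
      refine .and SA SB _ _ A B {β ∈ B | ¬ Sat SB β ψ} {β ∈ B | ¬ Sat SB β θ} h1 (by omega) ?_
        (ihψ _ SA SB A _ hv.1 le_rfl (fun α hα => (hA α hα).1) (fun β hβ => hβ.2))
        (ihθ _ SA SB A _ hv.2 (by omega) (fun α hα => (hA α hα).2) (fun β hβ => hβ.2))
      ext β
      constructor
      · rintro (h | h) <;> exact h.1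
      · intro hβ
        by_cases h : Sat SB β ψ
        · exact Or.inr ⟨hβ, fun hθ => hB β hβ ⟨h, hθ⟩⟩
        · exact Or.inl ⟨hβ, h⟩
  | exCnt k j ψ ih =>
      intro w SA SB A B hv hs hA hB
      obtain ⟨w', rfl⟩ : ∃ w', w = w' + 1 :=
        ⟨w - 1, by have := ψ.one_le_size; simp [CFormula.size] at hs; omega⟩
      have hs' : ψ.size ≤ w' := by simp [CFormula.size] at hs; omega
      rcases k with _ | k'
      · -- k = 0 : the formula is trivially true, so B must be empty
        refine .atom SA SB _ A B (by omega) ⟨.eq .min .min, trivial, ⟨trivial, trivial⟩,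
          fun α _ => rfl, fun β hβ _ => hB β hβ ⟨Fin.elim0, fun a => a.elim0, fun i => i.elim0⟩⟩
      · set k := k' + 1
        have hAex : ∀ α ∈ A, ∃ f : Fin k → SA.carrier, Function.Injective f ∧
            ∀ i, Sat SA (Function.update α j (f i)) ψ := fun α h => hA α h
        classical
        let F : (ℕ → SA.carrier) → Fin k → SA.carrier :=
          fun α => if h : α ∈ A then (hAex α h).choose else fun _ => SA.bot
        have hBex : ∀ (G : (ℕ → SB.carrier) → Fin k → SB.carrier) (β : ℕ → SB.carrier),
            β ∈ B → Function.Injective (G β) →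
            ∃ i : Fin k, ¬ Sat SB (Function.update β j (G β i)) ψ := by
          intro G β hβ hinj
          by_contra hcon
          push_neg at hcon
          exact hB β hβ ⟨G β, hinj, hcon⟩
        let sel : ((ℕ → SB.carrier) → Fin k → SB.carrier) → (ℕ → SB.carrier) → Fin k :=
          fun G β => if h : β ∈ B ∧ Function.Injective (G β)
            then (hBex G β h.1 h.2).choose else ⟨0, Nat.succ_pos k'⟩
        refine .exCnt SA SB w' A B j k F sel hv.1 ?_ ?_
        · intro α hα
          simp only [F, dif_pos hα]
          exact (hAex α hα).choose_spec.1
        · refine ih w' SA SB _ _ hv.2 hs' ?_ ?_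
          · rintro α' ⟨α, hα, i, rfl⟩
            have : F α = (hAex α hα).choose := dif_pos hα
            rw [this]
            exact (hAex α hα).choose_spec.2 i
          · rintro β' ⟨G, hG, β, hβ, rfl⟩
            have hc : β ∈ B ∧ Function.Injective (G β) := ⟨hβ, hG β hβ⟩
            have : sel G β = (hBex G β hc.1 hc.2).choose := dif_pos hc
            rw [this]
            exact (hBex G β hc.1 hc.2).choose_spec
  | allCnt k j ψ ih =>
      intro w SA SB A B hv hs hA hB
      obtain ⟨w', rfl⟩ : ∃ w', w = w' + 1 :=
        ⟨w - 1, by have := ψ.one_le_size; simp [CFormula.size] at hs; omega⟩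
      have hs' : ψ.size ≤ w' := by simp [CFormula.size] at hs; omega
      rcases k with _ | k'
      · -- k = 0 : the formula is trivially false, so A must be empty
        refine .neg SA SB w' A B (.atom SB SA w' B A (ψ.one_le_size.trans hs')
          ⟨.eq .min .min, trivial, ⟨trivial, trivial⟩, fun β _ => rfl,
            fun α hα _ => hA α hα ⟨Fin.elim0, fun a => a.elim0, fun i => i.elim0⟩⟩)
      · set k := k' + 1
        have hBex : ∀ β ∈ B, ∃ f : Fin k → SB.carrier, Function.Injective f ∧
            ∀ i, ¬ Sat SB (Function.update β j (f i)) ψ := fun β h => not_not.mp (hB β h)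
        classical
        let F : (ℕ → SB.carrier) → Fin k → SB.carrier :=
          fun β => if h : β ∈ B then (hBex β h).choose else fun _ => SB.bot
        have hAex : ∀ (G : (ℕ → SA.carrier) → Fin k → SA.carrier) (α : ℕ → SA.carrier),
            α ∈ A → Function.Injective (G α) →
            ∃ i : Fin k, Sat SA (Function.update α j (G α i)) ψ := by
          intro G α hα hinj
          by_contra hcon
          push_neg at hcon
          exact hA α hα ⟨G α, hinj, hcon⟩
        let sel : ((ℕ → SA.carrier) → Fin k → SA.carrier) → (ℕ → SA.carrier) → Fin k :=
          fun G α => if h : α ∈ A ∧ Function.Injective (G α)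
            then (hAex G α h.1 h.2).choose else ⟨0, Nat.succ_pos k'⟩
        refine .allCnt SA SB w' A B j k F sel hv.1 ?_ ?_
        · intro β hβ
          simp only [F, dif_pos hβ]
          exact (hBex β hβ).choose_spec.1
        · refine ih w' SA SB _ _ hv.2 hs' ?_ ?_
          · rintro α' ⟨G, hG, α, hα, rfl⟩
            have hc : α ∈ A ∧ Function.Injective (G α) := ⟨hα, hG α hα⟩
            have : sel G α = (hAex G α hc.1 hc.2).choose := dif_pos hc
            rw [this]
            exact (hAex G α hc.1 hc.2).choose_spec
          · rintro β' ⟨β, hβ, i, rfl⟩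
            have : F β = (hBex β hβ).choose := dif_pos hβ
            rw [this]
            exact (hBex β hβ).choose_spec.2 i

/-- **Characterization Theorem.** Let `A`, `B` be families of interpretations and
`w` a positive integer. Spoiler has a winning strategy in `CS^m_w(A,B)` iff there is a formula
`φ` of `m`-variable counting logic of size `≤ w` with `(A, B) ⊨ φ`. -/
theorem CS_game_characterization (m w : ℕ) (hw : 1 ≤ w) (SA SB : LOStruct)
    (A : Set (ℕ → SA.carrier)) (B : Set (ℕ → SB.carrier)) :
    SpoilerWins m SA SB w A B ↔
      ∃ φ : CFormula, φ.varsLT m ∧ φ.size ≤ w ∧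
        (∀ α ∈ A, Sat SA α φ) ∧ (∀ β ∈ B, ¬ Sat SB β φ) := by
  constructor
  · exact toFormula
  · rintro ⟨φ, hv, hs, hA, hB⟩
    exact ofFormula φ w SA SB A B hv hs hA hB
end

section
/- Let T be a finite binary tree in which each node v carries a weight w(v) > 0 such that: if v is a leaf then w(v) ≤ 1; if v has two children v_1, v_2 then w(v) ≤ w(v_1) + w(v_2); and if v has exactly one child v_1 then w(v) ≤ w(v_1) + t. Then the number of nodes of T satisfies |T| ≥ w(r)/t, where r is the root of T and t ≥ 1. -/
/-- A finite binary tree with a real weight attached to every node: every node has zero, one,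
or two children. -/
inductive WTree : Type
  | leaf : ℝ → WTree
  | node1 : ℝ → WTree → WTree
  | node2 : ℝ → WTree → WTree → WTree

namespace WTree

/-- The weight of the root node. -/
def weight : WTree → ℝ
  | leaf w => w
  | node1 w _ => w
  | node2 w _ _ => w

/-- The number of nodes of the tree. -/
def size : WTree → ℕ
  | leaf _ => 1
  | node1 _ T₁ => T₁.size + 1
  | node2 _ T₁ T₂ => T₁.size + T₂.size + 1

/-- The weighting conditions: every node has weight `> 0`; a leaf has weight `≤ 1`; a node with
two children has weight at most the sum of the children's weights; a node with exactly one
child has weight at most the child's weight plus `t`. -/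
def Valid (t : ℝ) : WTree → Prop
  | leaf w => 0 < w ∧ w ≤ 1
  | node1 w T₁ => 0 < w ∧ w ≤ T₁.weight + t ∧ T₁.Valid t
  | node2 w T₁ T₂ => 0 < w ∧ w ≤ T₁.weight + T₂.weight ∧ T₁.Valid t ∧ T₂.Valid t

end WTree

lemma weight_le (t : ℝ) (ht : 1 ≤ t) (T : WTree) (hT : T.Valid t) :
    T.weight ≤ t * T.size := by
  induction T with
  | leaf w =>
    simp only [WTree.weight, WTree.size, Nat.cast_one, mul_one]
    exact hT.2.trans ht
  | node1 w T₁ ih =>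
    obtain ⟨_, hle, hv⟩ := hT
    simp only [WTree.weight, WTree.size, Nat.cast_add, Nat.cast_one]
    calc w ≤ T₁.weight + t := hle
      _ ≤ t * T₁.size + t := by linarith [ih hv]
      _ = t * (T₁.size + 1) := by ring
  | node2 w T₁ T₂ ih₁ ih₂ =>
    obtain ⟨_, hle, hv₁, hv₂⟩ := hT
    simp only [WTree.weight, WTree.size, Nat.cast_add, Nat.cast_one]
    have ht0 : (0:ℝ) ≤ t := by linarith
    calc w ≤ T₁.weight + T₂.weight := hle
      _ ≤ t * T₁.size + t * T₂.size := add_le_add (ih₁ hv₁) (ih₂ hv₂)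
      _ ≤ t * (T₁.size + T₂.size + 1) := by nlinarith

/-- Let `T` be a finite binary tree in which each node `v` carries a weight
`w(v) > 0` such that: leaves have weight `≤ 1`; a node with two children `v₁, v₂` has
`w(v) ≤ w(v₁) + w(v₂)`; a node with exactly one child `v₁` has `w(v) ≤ w(v₁) + t`.  Then,
for `t ≥ 1`, the number of nodes of `T` satisfies `|T| ≥ w(r)/t` where `r` is the root. -/
theorem tree_size_lower_bound (t : ℕ) (ht : 1 ≤ t) (T : WTree) (hT : T.Valid t) :
    T.weight / t ≤ (T.size : ℝ) := by
  have ht' : (1:ℝ) ≤ t := by exact_mod_cast ht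
  have h := weight_le t ht' T hT
  rw [div_le_iff₀ (by linarith)]
  linarith
end
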